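/- arXiv:2101.05543 — 9 statements merged into one kernel-verified Lean document; each statement's English description precedes it below -/
import Mathlib

section
/- Let 1 ≤ k < n and let q = (β, α) ∈ Q_k be a token state such that some account a with |σ_q(a)| = k has β(a) > 0. Then there exist a process p̄ ∈ Π and a value v > 0 such that the state q' obtained when the owner ω(a) invokes approve(p̄, v) on q (i.e., q' is q with α(a, p̄) set to v) satisfies q' ∈ Q_{k+1}. -/
/-- A token state: balances and allowances. -/
structure TokenState (A P : Type*) where
  bal : A → ℕ
  alw : A × P → ℕ

variable {A P : Type*} [DecidableEq A] [DecidableEq P] [Fintype A] [Fintype P]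

/-- The set of enabled spenders of account `a` in state `q`. -/
def spenders (ω : A ≃ P) (q : TokenState A P) (a : A) : Finset P :=
  if q.bal a = 0 then {ω a}
  else Finset.univ.filter fun p => p = ω a ∨ 0 < q.alw (a, p)

/-- The maximum, over all accounts, of the number of enabled spenders. -/
def maxSpenders (ω : A ≃ P) (q : TokenState A P) : ℕ :=
  Finset.univ.sup fun a => (spenders ω q a).card

/-- `Qset ω k` is the set of token states whose maximal number of enabled
spenders for a single account equals `k`. -/
def Qset (ω : A ≃ P) (k : ℕ) : Set (TokenState A P) :=
  {q | maxSpenders ω q = k}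

/-- `transfer(a_d, v)` invoked by process `p`. Returns the new state and the response. -/
def transferOp (ω : A ≃ P) (p : P) (ad : A) (v : ℕ) (q : TokenState A P) :
    TokenState A P × Bool :=
  if v ≤ q.bal (ω.symm p) then
    (⟨Function.update (Function.update q.bal (ω.symm p) (q.bal (ω.symm p) - v)) ad
        (Function.update q.bal (ω.symm p) (q.bal (ω.symm p) - v) ad + v), q.alw⟩, true)
  else (q, false)

/-- `transferFrom(a_s, a_d, v)` invoked by process `p`. -/
def transferFromOp (p : P) (asrc ad : A) (v : ℕ) (q : TokenState A P) :
    TokenState A P × Bool :=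
  if v ≤ q.bal asrc ∧ v ≤ q.alw (asrc, p) then
    (⟨Function.update (Function.update q.bal asrc (q.bal asrc - v)) ad
        (Function.update q.bal asrc (q.bal asrc - v) ad + v),
      Function.update q.alw (asrc, p) (q.alw (asrc, p) - v)⟩, true)
  else (q, false)

/-- `approve(p̄, v)` invoked by process `p`: always succeeds and sets `α(a_p, p̄) := v`. -/
def approveOp (ω : A ≃ P) (p pbar : P) (v : ℕ) (q : TokenState A P) :
    TokenState A P × Bool :=
  (⟨q.bal, Function.update q.alw (ω.symm p, pbar) v⟩, true)

/-- if `1 ≤ k < n`, `q ∈ Q_k`, and some account `a` with exactly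
`k` enabled spenders has positive balance, then there are a process `p̄` and a
value `v > 0` such that the state obtained when the owner `ω(a)` invokes
`approve(p̄, v)` on `q` lies in `Q_{k+1}`. -/
theorem stmt2 (n : ℕ) (hcA : Fintype.card A = n) (hcP : Fintype.card P = n)
    (ω : A ≃ P) (k : ℕ) (hk : 1 ≤ k) (hkn : k < n)
    (q : TokenState A P) (hq : q ∈ Qset ω k)
    (a : A) (ha : (spenders ω q a).card = k) (hba : 0 < q.bal a) :
    ∃ (pbar : P) (v : ℕ), 0 < v ∧
      (approveOp ω (ω a) pbar v q).1 ∈ Qset ω (k + 1) := by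
  have hlt : (spenders ω q a).card < (Finset.univ : Finset P).card := by
    rw [ha, Finset.card_univ, hcP]; exact hkn
  have hpbex : ∃ p, p ∉ spenders ω q a := by
    by_contra h
    push_neg at h
    have : Finset.univ ⊆ spenders ω q a := fun p _ => h p
    exact absurd (Finset.card_le_card this) (not_le.mpr hlt)
  obtain ⟨pbar, hpb⟩ := hpbex
  refine ⟨pbar, 1, one_pos, ?_⟩
  set q' := (approveOp ω (ω a) pbar 1 q).1 with hq'
  have hbal : q'.bal = q.bal := rfl
  have hsymm : ω.symm (ω a) = a := ω.symm_apply_apply a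
  have halw : ∀ a' p, a' ≠ a → q'.alw (a', p) = q.alw (a', p) := by
    intro a' p hne
    show Function.update q.alw (ω.symm (ω a), pbar) 1 (a', p) = q.alw (a', p)
    rw [Function.update_of_ne]
    rw [hsymm]
    simp [Prod.ext_iff]
    intro h; exact absurd h hne
  have hsp_other : ∀ a', a' ≠ a → spenders ω q' a' = spenders ω q a' := by
    intro a' hne
    unfold spenders
    rw [hbal]
    split
    · rfl
    · apply Finset.filter_congr
      intro p _
      rw [halw a' p hne]
  have hsp_a : spenders ω q' a = insert pbar (spenders ω q a) := by
    have hb : ¬ q.bal a = 0 := hba.ne'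
    unfold spenders
    rw [hbal, if_neg hb, if_neg hb]
    ext p
    simp only [Finset.mem_insert, Finset.mem_filter, Finset.mem_univ, true_and]
    show (p = ω a ∨ 0 < Function.update q.alw (ω.symm (ω a), pbar) 1 (a, p)) ↔ _
    rw [hsymm]
    rcases eq_or_ne p pbar with rfl | hne
    · simp [Function.update_self]
    · rw [Function.update_of_ne (by simp [Prod.ext_iff, hne])]
      tauto
  have hcard_a : (spenders ω q' a).card = k + 1 := by
    have hnm : pbar ∉ spenders ω q a := hpb
    rw [hsp_a, Finset.card_insert_of_notMem hnm, ha]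
  show maxSpenders ω q' = k + 1
  unfold maxSpenders
  apply le_antisymm
  · apply Finset.sup_le
    intro a' _
    rcases eq_or_ne a' a with rfl | hne
    · rw [hcard_a]
    · rw [hsp_other a' hne]
      calc (spenders ω q a').card ≤ maxSpenders ω q :=
            Finset.le_sup (f := fun a => (spenders ω q a).card) (Finset.mem_univ a')
        _ = k := hq
        _ ≤ k + 1 := Nat.le_succ k
  · rw [← hcard_a]
    exact Finset.le_sup (f := fun a => (spenders ω q' a).card) (Finset.mem_univ a)
end

section
/- In every sequential execution from q of a sequence of invocations in which each of the competing invocations o_1, …, o_k occurs at most once, in an arbitrary order, at most one invocation returns true. -/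
variable {A P : Type*} [DecidableEq A] [DecidableEq P] [Fintype A] [Fintype P]

/-- Sequential execution of a list of invocations: the final state. -/
def execRun {ι : Type*} (ops : ι → TokenState A P → TokenState A P × Bool) :
    List ι → TokenState A P → TokenState A P
  | [], q => q
  | i :: r, q => execRun ops r (ops i q).1

/-- Sequential execution of a list of invocations, recording each invocation
together with its response. -/
def runRes {ι : Type*} (ops : ι → TokenState A P → TokenState A P × Bool) :
    List ι → TokenState A P → List (ι × Bool)
  | [], _ => []
  | i :: r, q => (i, (ops i q).2) :: runRes ops r (ops i q).1

/-- The competing invocations: `o_0` is `transfer(a_d, B)` by the owner `p 0`,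
and for `i ≠ 0`, `o_i` is `transferFrom(a_1, a_d, A_i)` by `p i`, where `B` and
`A_i` are the balance and allowances in the fixed starting state `q`. -/
def compOps (ω : A ≃ P) (q : TokenState A P) (a1 ad : A) {k : ℕ} [NeZero k]
    (p : Fin k → P) (i : Fin k) : TokenState A P → TokenState A P × Bool :=
  if i = 0 then transferOp ω (p 0) ad (q.bal a1)
  else transferFromOp (p i) a1 ad (q.alw (a1, p i))

/-!
The balance of `a₁` is a budget: an invocation returning `true` spends its amount from it (the
owner's transfer spends `B`, the `i`-th `transferFrom` spends `A_i`), and nothing refills it since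
`a_d ≠ a₁`. Any two competing amounts together exceed `B`, so once one invocation has succeeded
the remaining budget is smaller than every amount still to come, and all later ones fail.
-/

section Budget

omit [DecidableEq A] [DecidableEq P] [Fintype A] [Fintype P]

variable {ι : Type*} (ops : ι → TokenState A P → TokenState A P × Bool)
  (f : TokenState A P → ℕ) (d : ι → ℕ)

def SpendsBudget : Prop :=
  ∀ i s, f (ops i s).1 + (if (ops i s).2 then d i else 0) ≤ f s

variable {ops f d}

theorem countP_runRes_eq_zero (h : SpendsBudget ops f d) :
    ∀ (l : List ι) (s : TokenState A P), (∀ i ∈ l, f s < d i) →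
      (runRes ops l s).countP (·.2) = 0
  | [], _, _ => rfl
  | i :: r, s, hl => by
    have hi := h i s
    have hfail : (ops i s).2 = false := by
      by_contra hok
      rw [Bool.not_eq_false] at hok
      rw [if_pos hok] at hi
      have := hl i List.mem_cons_self
      omega
    rw [hfail, if_neg Bool.false_ne_true, add_zero] at hi
    simp only [runRes, List.countP_cons, hfail, Bool.false_eq_true, if_false, add_zero]
    exact countP_runRes_eq_zero h r _ fun j hj => hi.trans_lt (hl j (List.mem_cons_of_mem i hj))

theorem countP_runRes_le_one (h : SpendsBudget ops f d) :
    ∀ (l : List ι) (s : TokenState A P), l.Pairwise (fun i j => f s < d i + d j) →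
      (runRes ops l s).countP (·.2) ≤ 1
  | [], _, _ => zero_le_one
  | i :: r, s, hl => by
    obtain ⟨hi, hr⟩ := List.pairwise_cons.mp hl
    have hs := h i s
    simp only [runRes, List.countP_cons]
    cases hok : (ops i s).2
    · rw [hok, if_neg Bool.false_ne_true, add_zero] at hs
      simp only [Bool.false_eq_true, if_false, add_zero]
      exact countP_runRes_le_one h r _ (hr.imp fun hij => hs.trans_lt hij)
    · rw [hok, if_pos rfl] at hs
      rw [countP_runRes_eq_zero h r _ fun j hj => by have := hi j hj; omega]
      simp

end Budget

section CompetingAmounts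

omit [DecidableEq A] [DecidableEq P] [Fintype A] [Fintype P]

def compAmount (q : TokenState A P) (a1 : A) {k : ℕ} [NeZero k] (p : Fin k → P) (i : Fin k) : ℕ :=
  if i = 0 then q.bal a1 else q.alw (a1, p i)

theorem lt_compAmount_add_compAmount (q : TokenState A P) (a1 : A) {k : ℕ} [NeZero k]
    (p : Fin k → P) (hAi : ∀ i : Fin k, i ≠ 0 → 0 < q.alw (a1, p i))
    (hut : k ≤ 2 ∨ ∀ i j : Fin k, i ≠ 0 → j ≠ 0 → i ≠ j →
      q.bal a1 < q.alw (a1, p i) + q.alw (a1, p j))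
    {i j : Fin k} (hij : i ≠ j) :
    q.bal a1 < compAmount q a1 p i + compAmount q a1 p j := by
  unfold compAmount
  split_ifs with hi hj hj
  · exact absurd (hi.trans hj.symm) hij
  · have := hAi j hj; omega
  · have := hAi i hi; omega
  · rcases hut with hk | hut
    · have := Fin.val_ne_of_ne hi
      have := Fin.val_ne_of_ne hj
      have := Fin.val_ne_of_ne hij
      simp only [Fin.val_zero] at *
      omega
    · exact hut i j hi hj hij

end CompetingAmounts

section Transfers

omit [Fintype A] [Fintype P]

omit [DecidableEq P] in
theorem bal_transferOp_add (ω : A ≃ P) {p : P} {ad : A} (had : ad ≠ ω.symm p) (v : ℕ)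
    (s : TokenState A P) :
    (transferOp ω p ad v s).1.bal (ω.symm p) + (if (transferOp ω p ad v s).2 then v else 0) =
      s.bal (ω.symm p) := by
  by_cases hv : v ≤ s.bal (ω.symm p) <;> simp [transferOp, hv, Function.update_of_ne had.symm]

theorem bal_transferFromOp_add (p : P) {asrc ad : A} (had : ad ≠ asrc) (v : ℕ)
    (s : TokenState A P) :
    (transferFromOp p asrc ad v s).1.bal asrc +
        (if (transferFromOp p asrc ad v s).2 then v else 0) = s.bal asrc := by
  by_cases hv : v ≤ s.bal asrc ∧ v ≤ s.alw (asrc, p) <;>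
    simp [transferFromOp, hv, Function.update_of_ne had.symm]

theorem spendsBudget_compOps (ω : A ≃ P) (q : TokenState A P) {a1 ad : A} (had : ad ≠ a1)
    {k : ℕ} [NeZero k] {p : Fin k → P} (hp1 : p 0 = ω a1) :
    SpendsBudget (compOps ω q a1 ad p) (fun s => s.bal a1) (compAmount q a1 p) := by
  intro i s
  by_cases hi : i = 0
  · have h := bal_transferOp_add ω (p := ω a1) (by rwa [ω.symm_apply_apply]) (q.bal a1) s
    rw [ω.symm_apply_apply] at h
    simp only [compOps, compAmount, hi, if_pos, hp1]
    exact h.le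
  · simp only [compOps, compAmount, if_neg hi]
    exact (bal_transferFromOp_add (p i) had _ s).le

end Transfers

theorem stmt4_general (ω : A ≃ P)
    (q : TokenState A P) (a1 ad : A) (had : ad ≠ a1)
    (k : ℕ) [NeZero k]
    (p : Fin k → P) (hp1 : p 0 = ω a1)
    (hAi : ∀ i : Fin k, i ≠ 0 → 0 < q.alw (a1, p i))
    (hut : k ≤ 2 ∨ ∀ i j : Fin k, i ≠ 0 → j ≠ 0 → i ≠ j →
      q.bal a1 < q.alw (a1, p i) + q.alw (a1, p j)) :
    ∀ l : List (Fin k), l.Nodup →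
      (runRes (compOps ω q a1 ad p) l q).countP (fun x => x.2) ≤ 1 := fun l hl =>
  countP_runRes_le_one (spendsBudget_compOps ω q had hp1) l q <|
    hl.pairwise_of_forall_ne fun _ _ _ _ hij => lt_compAmount_add_compAmount q a1 p hAi hut hij

/-- in every sequential execution from `q` of a sequence of
invocations in which each competing invocation occurs at most once, in an
arbitrary order, at most one invocation returns `true`. -/
theorem stmt4 (n : ℕ) (hn : 1 ≤ n)
    (hcA : Fintype.card A = n) (hcP : Fintype.card P = n) (ω : A ≃ P)
    (q : TokenState A P) (a1 ad : A) (had : ad ≠ a1)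
    (k : ℕ) [NeZero k] (hkn : k ≤ n)
    (p : Fin k → P) (hinj : Function.Injective p) (hp1 : p 0 = ω a1)
    (hB : 0 < q.bal a1)
    (hAi : ∀ i : Fin k, i ≠ 0 → 0 < q.alw (a1, p i))
    (hut : k ≤ 2 ∨ ∀ i j : Fin k, i ≠ 0 → j ≠ 0 → i ≠ j →
      q.bal a1 < q.alw (a1, p i) + q.alw (a1, p j)) :
    ∀ l : List (Fin k), l.Nodup →
      (runRes (compOps ω q a1 ad p) l q).countP (fun x => x.2) ≤ 1 :=
  stmt4_general ω q a1 ad had k p hp1 hAi hut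
end

section
/- In every sequential execution from q consisting of all k competing invocations o_1, …, o_k, each exactly once and in an arbitrary order, exactly one invocation returns true; namely, the successful invocation is the earliest invocation o_j in the order such that either j = 1 or A_j ≤ B, and every other invocation returns false. -/
variable {A P : Type*} [DecidableEq A] [DecidableEq P] [Fintype A] [Fintype P]

/-!
Call `o_j` eligible if it is the owner's transfer or if `A_j ≤ B`. Every invocation before the
first eligible one asks for more than the balance `B` and fails without changing the state; the
first eligible one then succeeds and leaves `B - A_j` (or `0`) on `a_1`. By the uniquetransfer
condition this remainder is below the amount requested by every other competitor, so all later
invocations fail for lack of balance, whatever their allowances.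
-/

theorem List.Nodup.ne_middle {ι : Type*} {l₁ l₂ : List ι} {i j : ι} (hnd : (l₁ ++ j :: l₂).Nodup)
    (hi : i ∈ l₁ ++ l₂) : i ≠ j := by
  rintro rfl
  exact (List.nodup_cons.mp (List.nodup_middle.mp hnd)).1 hi

section Runs

variable {α β ι : Type*} (ops : ι → TokenState α β → TokenState α β × Bool)

theorem runRes_append (l₁ l₂ : List ι) (q : TokenState α β) :
    runRes ops (l₁ ++ l₂) q = runRes ops l₁ q ++ runRes ops l₂ (execRun ops l₁ q) := by
  induction l₁ generalizing q with
  | nil => rfl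
  | cons i l ih => simp only [List.cons_append, runRes, execRun, ih]

variable {ops} {l : List ι} {q : TokenState α β}

theorem execRun_of_forall_fail (h : ∀ i ∈ l, ops i q = (q, false)) : execRun ops l q = q := by
  induction l with
  | nil => rfl
  | cons i l ih =>
    simp only [List.forall_mem_cons] at h
    simp only [execRun, h.1, ih h.2]

theorem runRes_of_forall_fail (h : ∀ i ∈ l, ops i q = (q, false)) :
    runRes ops l q = l.map fun i => (i, false) := by
  induction l with
  | nil => rfl
  | cons i l ih =>
    simp only [List.forall_mem_cons] at h
    simp only [runRes, h.1, ih h.2, List.map_cons]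

theorem runRes_of_unique_success [DecidableEq ι] {l₁ l₂ : List ι} {j : ι}
    (hl₁ : ∀ i ∈ l₁, ops i q = (q, false)) (hj : (ops j q).2 = true)
    (hl₂ : ∀ i ∈ l₂, ops i (ops j q).1 = ((ops j q).1, false)) (hnd : (l₁ ++ j :: l₂).Nodup) :
    runRes ops (l₁ ++ j :: l₂) q = (l₁ ++ j :: l₂).map fun i => (i, decide (i = j)) := by
  rw [runRes_append, execRun_of_forall_fail hl₁, runRes_of_forall_fail hl₁, runRes, hj,
    runRes_of_forall_fail hl₂, List.map_append, List.map_cons, decide_eq_true rfl]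
  refine congrArg₂ (· ++ ·) (List.map_congr_left fun i hi => ?_)
    (congrArg _ (List.map_congr_left fun i hi => ?_))
  · simp [hnd.ne_middle (List.mem_append_left _ hi)]
  · simp [hnd.ne_middle (List.mem_append_right _ hi)]

end Runs

theorem transferOp_of_bal_lt {α β : Type*} [DecidableEq α] (ω : α ≃ β) (p : β) (ad : α)
    {v : ℕ} {q : TokenState α β} (h : q.bal (ω.symm p) < v) : transferOp ω p ad v q = (q, false) :=
  if_neg h.not_ge

theorem transferFromOp_of_bal_lt {α β : Type*} [DecidableEq α] [DecidableEq β] (p : β)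
    (asrc ad : α) {v : ℕ} {q : TokenState α β} (h : q.bal asrc < v) :
    transferFromOp p asrc ad v q = (q, false) :=
  if_neg fun h' => h.not_ge h'.1

section Competition

variable {α β : Type*} {q : TokenState α β} {a1 : α} {k : ℕ} [NeZero k] {p : Fin k → β}

variable (q a1 p) in
def competingAmount (i : Fin k) : ℕ :=
  if i = 0 then q.bal a1 else q.alw (a1, p i)

theorem competingAmount_le_bal_iff {i : Fin k} :
    competingAmount q a1 p i ≤ q.bal a1 ↔ i = 0 ∨ q.alw (a1, p i) ≤ q.bal a1 := by
  unfold competingAmount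
  split_ifs with hi <;> simp [hi]

theorem bal_sub_competingAmount_lt (hAi : ∀ i : Fin k, i ≠ 0 → 0 < q.alw (a1, p i))
    (hut : k ≤ 2 ∨ ∀ i j : Fin k, i ≠ 0 → j ≠ 0 → i ≠ j →
      q.bal a1 < q.alw (a1, p i) + q.alw (a1, p j))
    {i j : Fin k} (hij : i ≠ j) (hj : competingAmount q a1 p j ≤ q.bal a1) :
    q.bal a1 - competingAmount q a1 p j < competingAmount q a1 p i := by
  unfold competingAmount at hj ⊢
  by_cases hj0 : j = 0
  · subst hj0
    simpa [hij] using hAi i hij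
  have hAj := hAi j hj0
  by_cases hi0 : i = 0
  · subst hi0
    simp only [hj0, if_false, if_true] at hj ⊢
    omega
  simp only [hi0, hj0, if_false] at hj ⊢
  rcases hut with hk | hut
  · have := Fin.val_ne_of_ne hij
    have := Fin.val_ne_iff.mpr hi0
    have := Fin.val_ne_iff.mpr hj0
    omega
  · have := hut i j hi0 hj0 hij
    omega

variable [DecidableEq α] [DecidableEq β] {ω : α ≃ β} {ad : α}

theorem compOps_of_bal_lt (hp1 : p 0 = ω a1) {i : Fin k} {q' : TokenState α β}
    (h : q'.bal a1 < competingAmount q a1 p i) :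
    compOps ω q a1 ad p i q' = (q', false) := by
  unfold competingAmount at h
  unfold compOps
  split_ifs at h ⊢ with hi
  · exact transferOp_of_bal_lt ω _ ad (by simpa [hp1] using h)
  · exact transferFromOp_of_bal_lt _ a1 ad h

theorem compOps_of_le_bal (hp1 : p 0 = ω a1) (had : ad ≠ a1) {i : Fin k}
    (h : competingAmount q a1 p i ≤ q.bal a1) :
    (compOps ω q a1 ad p i q).2 = true ∧
      (compOps ω q a1 ad p i q).1.bal a1 = q.bal a1 - competingAmount q a1 p i := by
  unfold competingAmount at h ⊢
  unfold compOps
  split_ifs at h ⊢ with hi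
  · simp [transferOp, hp1, had.symm]
  · simp [transferFromOp, h, had.symm]

end Competition

theorem stmt5_general (ω : A ≃ P)
    (q : TokenState A P) (a1 ad : A) (had : ad ≠ a1)
    (k : ℕ) [NeZero k]
    (p : Fin k → P) (hp1 : p 0 = ω a1)
    (hAi : ∀ i : Fin k, i ≠ 0 → 0 < q.alw (a1, p i))
    (hut : k ≤ 2 ∨ ∀ i j : Fin k, i ≠ 0 → j ≠ 0 → i ≠ j →
      q.bal a1 < q.alw (a1, p i) + q.alw (a1, p j)) :
    ∀ l : List (Fin k), l.Nodup → (∀ i : Fin k, i ∈ l) →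
      (runRes (compOps ω q a1 ad p) l q).countP (fun x => x.2) = 1 ∧
      ∀ x ∈ runRes (compOps ω q a1 ad p) l q,
        (x.2 = true ↔
          l.find? (fun j => decide (j = 0 ∨ q.alw (a1, p j) ≤ q.bal a1))
            = some x.1) := by
  intro l hnd hall
  simp_rw [← competingAmount_le_bal_iff]
  obtain ⟨j, hfind⟩ : ∃ j, l.find? (fun i => competingAmount q a1 p i ≤ q.bal a1) = some j :=
    Option.isSome_iff_exists.mp (List.find?_isSome.mpr ⟨0, hall 0, by simp [competingAmount]⟩)
  obtain ⟨hj, l₁, l₂, rfl, hl₁⟩ := List.find?_eq_some_iff_append.mp hfind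
  replace hj : competingAmount q a1 p j ≤ q.bal a1 := by simpa using hj
  obtain ⟨hsucc, hbal⟩ := compOps_of_le_bal hp1 had hj
  have hrun : runRes (compOps ω q a1 ad p) (l₁ ++ j :: l₂) q =
      (l₁ ++ j :: l₂).map fun i => (i, decide (i = j)) := by
    refine runRes_of_unique_success (fun i hi => compOps_of_bal_lt hp1 ?_) hsucc
      (fun i hi => compOps_of_bal_lt hp1 ?_) hnd
    · simpa using hl₁ i hi
    · rw [hbal]
      exact bal_sub_competingAmount_lt hAi hut (hnd.ne_middle (List.mem_append_right _ hi)) hj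
  rw [hrun, hfind, List.countP_map]
  refine ⟨?_, ?_⟩
  · rw [← List.count_eq_one_of_mem (a := j) hnd (by simp), List.count_eq_countP]
    rfl
  · rintro _ hx
    obtain ⟨i, -, rfl⟩ := List.mem_map.mp hx
    simp [eq_comm]

/-- in every sequential execution from `q` of all `k` competing
invocations, each exactly once and in an arbitrary order, exactly one
invocation returns `true`, namely the earliest invocation `o_j` in the order
such that either `j` is the owner's index or `A_j ≤ B`; every other invocation
returns `false`. -/
theorem stmt5 (n : ℕ) (hn : 1 ≤ n)
    (hcA : Fintype.card A = n) (hcP : Fintype.card P = n) (ω : A ≃ P)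
    (q : TokenState A P) (a1 ad : A) (had : ad ≠ a1)
    (k : ℕ) [NeZero k] (hkn : k ≤ n)
    (p : Fin k → P) (hinj : Function.Injective p) (hp1 : p 0 = ω a1)
    (hB : 0 < q.bal a1)
    (hAi : ∀ i : Fin k, i ≠ 0 → 0 < q.alw (a1, p i))
    (hut : k ≤ 2 ∨ ∀ i j : Fin k, i ≠ 0 → j ≠ 0 → i ≠ j →
      q.bal a1 < q.alw (a1, p i) + q.alw (a1, p j)) :
    ∀ l : List (Fin k), l.Nodup → (∀ i : Fin k, i ∈ l) →
      (runRes (compOps ω q a1 ad p) l q).countP (fun x => x.2) = 1 ∧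
      ∀ x ∈ runRes (compOps ω q a1 ad p) l q,
        (x.2 = true ↔
          l.find? (fun j => decide (j = 0 ∨ q.alw (a1, p j) ≤ q.bal a1))
            = some x.1) :=
  stmt5_general ω q a1 ad had k p hp1 hAi hut
end

section
/- Consider a sequential execution from q of all k competing invocations o_1, …, o_k, each exactly once and in an arbitrary order, and let (β', α') be the final state. Then the set W = {i ∈ {2, …, k} : α'(a_1, p_i) = 0} contains at most one element; W = ∅ if and only if o_1 (the transfer by the owner p_1) is the unique successful invocation, and W = {i} if and only if o_i is the unique successful invocation; moreover α'(a_1, p_j) = A_j for every j ∈ {2, …, k} \ W. -/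
variable {A P : Type*} [DecidableEq A] [DecidableEq P] [Fintype A] [Fintype P]

/-!
As long as no invocation has succeeded the state is still `q`, and from `q` the owner's transfer
succeeds, so some invocation succeeds. The first success leaves the balance of `a_1` below the
amount of every other invocation that could still succeed: the owner's transfer empties it, and
the `transferFrom` of `p_i` leaves `B - A_i < A_j` by the uniquetransfer condition. So every later
invocation fails, and the final state is the one right after the first success, where exactly the
successful spender, if it is not the owner, has allowance `0`.
-/

theorem Fin.eq_of_ne_zero_of_le_two {k : ℕ} [NeZero k] (hk : k ≤ 2) {i j : Fin k}
    (hi : i ≠ 0) (hj : j ≠ 0) : i = j := by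
  rw [Ne, Fin.ext_iff, Fin.val_zero] at hi hj
  exact Fin.ext (by omega)

section Run

omit [DecidableEq A] [DecidableEq P] [Fintype A] [Fintype P]

variable {ι : Type*} (ops : ι → TokenState A P → TokenState A P × Bool)

def IsStuck (s : TokenState A P) : Prop :=
  ∀ i, ops i s = (s, false)

variable {ops}

def IsUniqueSuccess (R : List (ι × Bool)) (i : ι) : Prop :=
  (i, true) ∈ R ∧ ∀ x ∈ R, x.2 = true → x.1 = i

theorem IsUniqueSuccess.eq {R : List (ι × Bool)} {i j : ι} (hi : IsUniqueSuccess R i)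
    (hj : IsUniqueSuccess R j) : i = j :=
  hj.2 _ hi.1 rfl

theorem IsStuck.execRun_eq {s : TokenState A P} (hs : IsStuck ops s) :
    ∀ l, execRun ops l s = s
  | [] => rfl
  | i :: l => by rw [execRun, hs i]; exact hs.execRun_eq l

theorem IsStuck.runRes_snd {s : TokenState A P} (hs : IsStuck ops s) :
    ∀ l, ∀ x ∈ runRes ops l s, x.2 = false
  | [] => by simp [runRes]
  | i :: l => by
    simp only [runRes, hs i, List.mem_cons, forall_eq_or_imp, true_and]
    exact hs.runRes_snd l

theorem exists_isUniqueSuccess_runRes {s : TokenState A P}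
    (hfail : ∀ i, (ops i s).2 = false → (ops i s).1 = s)
    (hstuck : ∀ i, (ops i s).2 = true → IsStuck ops (ops i s).1) :
    ∀ {l : List ι}, (∃ i ∈ l, (ops i s).2 = true) →
      ∃ i, (ops i s).2 = true ∧ IsUniqueSuccess (runRes ops l s) i ∧
        execRun ops l s = (ops i s).1
  | [], ⟨_, hi, _⟩ => absurd hi List.not_mem_nil
  | j :: l, hl => by
    cases hj : (ops j s).2 with
    | true =>
      refine ⟨j, hj, ⟨by simp [runRes, hj], ?_⟩, (hstuck j hj).execRun_eq l⟩
      simp only [runRes, hj, List.mem_cons, forall_eq_or_imp, imp_self, true_and]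
      intro x hx hxt
      simp [(hstuck j hj).runRes_snd l x hx] at hxt
    | false =>
      have hl' : ∃ i ∈ l, (ops i s).2 = true := by
        obtain ⟨i, hi, hit⟩ := hl
        rcases List.mem_cons.1 hi with rfl | hi
        · simp [hj] at hit
        · exact ⟨i, hi, hit⟩
      obtain ⟨i, hit, ⟨hmem, huniq⟩, hfinal⟩ :=
        exists_isUniqueSuccess_runRes hfail hstuck hl'
      refine ⟨i, hit, ⟨?_, ?_⟩, ?_⟩
      · simpa [runRes, hj, hfail j hj] using hmem
      · simpa [runRes, hj, hfail j hj] using huniq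
      · rw [execRun, hfail j hj, hfinal]

end Run

section Competing

omit [Fintype A] [Fintype P]

omit [DecidableEq P] in
theorem transferOp_fst_of_snd_eq_false {ω : A ≃ P} {p : P} {ad : A} {v : ℕ}
    {s : TokenState A P}
    (h : (transferOp ω p ad v s).2 = false) : (transferOp ω p ad v s).1 = s := by
  unfold transferOp at *
  split_ifs at h ⊢
  rfl

theorem transferFromOp_fst_of_snd_eq_false {p : P} {asrc ad : A} {v : ℕ} {s : TokenState A P}
    (h : (transferFromOp p asrc ad v s).2 = false) : (transferFromOp p asrc ad v s).1 = s := by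
  unfold transferFromOp at *
  split_ifs at h ⊢
  rfl

variable {ω : A ≃ P} {q : TokenState A P} {a1 ad : A} {k : ℕ} [NeZero k] {p : Fin k → P}

theorem compOps_fst_of_snd_eq_false {i : Fin k} {s : TokenState A P}
    (h : (compOps ω q a1 ad p i s).2 = false) : (compOps ω q a1 ad p i s).1 = s := by
  unfold compOps at *
  split_ifs at h ⊢
  exacts [transferOp_fst_of_snd_eq_false h, transferFromOp_fst_of_snd_eq_false h]

theorem compOps_zero_snd (hp1 : p 0 = ω a1) : (compOps ω q a1 ad p 0 q).2 = true := by
  simp [compOps, transferOp, hp1]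

theorem isStuck_compOps (hp1 : p 0 = ω a1) {s : TokenState A P} (hbal : s.bal a1 < q.bal a1)
    (halw : ∀ j ≠ 0, s.bal a1 < q.alw (a1, p j) ∨ s.alw (a1, p j) < q.alw (a1, p j)) :
    IsStuck (compOps ω q a1 ad p) s := by
  intro i
  by_cases hi : i = 0
  · subst hi
    simp [compOps, transferOp, hp1, hbal]
  · have := halw i hi
    simp only [compOps, hi, if_false, transferFromOp]
    rw [if_neg (by omega)]

theorem compOps_bal_source (had : ad ≠ a1) (hp1 : p 0 = ω a1) {i : Fin k}
    (hi : (compOps ω q a1 ad p i q).2 = true) :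
    (compOps ω q a1 ad p i q).1.bal a1 =
      q.bal a1 - if i = 0 then q.bal a1 else q.alw (a1, p i) := by
  by_cases hi0 : i = 0
  · subst hi0
    simp [compOps, transferOp, hp1, Function.update_of_ne had.symm]
  · simp only [compOps, hi0, if_false, transferFromOp] at hi ⊢
    split_ifs at hi ⊢
    simp [Function.update_of_ne had.symm]

theorem compOps_alw (hinj : Function.Injective p) {i j : Fin k}
    (hi : (compOps ω q a1 ad p i q).2 = true) (hj : j ≠ 0) :
    (compOps ω q a1 ad p i q).1.alw (a1, p j) = if j = i then 0 else q.alw (a1, p j) := by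
  by_cases hi0 : i = 0
  · subst hi0
    simp only [compOps, if_true, transferOp, hj, if_false]
    split_ifs <;> rfl
  · simp only [compOps, hi0, if_false, transferFromOp] at hi ⊢
    split_ifs at hi ⊢ with _ hji
    · simp [hji]
    · have hpji : (a1, p j) ≠ (a1, p i) := fun h => hji (hinj (congrArg Prod.snd h))
      simp [Function.update_of_ne hpji]

theorem filter_alw_compOps_eq_zero (hinj : Function.Injective p)
    (hAi : ∀ i : Fin k, i ≠ 0 → 0 < q.alw (a1, p i)) {i : Fin k}
    (hi : (compOps ω q a1 ad p i q).2 = true) :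
    Finset.univ.filter (fun j => j ≠ 0 ∧ (compOps ω q a1 ad p i q).1.alw (a1, p j) = 0) =
      ({i} : Finset (Fin k)).erase 0 := by
  ext j
  simp only [Finset.mem_filter, Finset.mem_univ, true_and, Finset.mem_erase,
    Finset.mem_singleton]
  refine and_congr_right fun hj => ?_
  rw [compOps_alw hinj hi hj]
  split_ifs with hji
  · simp [hji]
  · simp [hji, (hAi j hj).ne']

theorem isStuck_compOps_of_snd_eq_true (had : ad ≠ a1) (hp1 : p 0 = ω a1)
    (hinj : Function.Injective p) (hB : 0 < q.bal a1)
    (hAi : ∀ i : Fin k, i ≠ 0 → 0 < q.alw (a1, p i))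
    (hut : ∀ i j : Fin k, i ≠ 0 → j ≠ 0 → i ≠ j →
      q.bal a1 < q.alw (a1, p i) + q.alw (a1, p j))
    {i : Fin k} (hi : (compOps ω q a1 ad p i q).2 = true) :
    IsStuck (compOps ω q a1 ad p) (compOps ω q a1 ad p i q).1 := by
  have hbal := compOps_bal_source had hp1 hi
  by_cases hi0 : i = 0
  · subst hi0
    refine isStuck_compOps hp1 (by simp [hbal, hB]) fun j hj => Or.inl ?_
    simpa [hbal] using hAi j hj
  · rw [if_neg hi0] at hbal
    have hAi0 := hAi i hi0
    refine isStuck_compOps hp1 (by omega) fun j hj => ?_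
    rw [hbal, compOps_alw hinj hi hj]
    by_cases hji : j = i
    · simp [hji, hAi0]
    · have := hut i j hi0 hj (Ne.symm hji)
      have := hAi j hj
      left
      omega

end Competing

theorem stmt6_general (ω : A ≃ P)
    (q : TokenState A P) (a1 ad : A) (had : ad ≠ a1)
    (k : ℕ) [NeZero k]
    (p : Fin k → P) (hinj : Function.Injective p) (hp1 : p 0 = ω a1)
    (hB : 0 < q.bal a1)
    (hAi : ∀ i : Fin k, i ≠ 0 → 0 < q.alw (a1, p i))
    (hut : k ≤ 2 ∨ ∀ i j : Fin k, i ≠ 0 → j ≠ 0 → i ≠ j →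
      q.bal a1 < q.alw (a1, p i) + q.alw (a1, p j)) :
    ∀ l : List (Fin k), l.Nodup → (∀ i : Fin k, i ∈ l) →
      let q' := execRun (compOps ω q a1 ad p) l q
      let W : Finset (Fin k) :=
        Finset.univ.filter fun i => i ≠ 0 ∧ q'.alw (a1, p i) = 0
      W.card ≤ 1 ∧
      (W = ∅ ↔
        (((0 : Fin k), true) ∈ runRes (compOps ω q a1 ad p) l q ∧
          ∀ x ∈ runRes (compOps ω q a1 ad p) l q, x.2 = true → x.1 = 0)) ∧
      (∀ i : Fin k, i ≠ 0 →
        (W = {i} ↔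
          ((i, true) ∈ runRes (compOps ω q a1 ad p) l q ∧
            ∀ x ∈ runRes (compOps ω q a1 ad p) l q, x.2 = true → x.1 = i))) ∧
      ∀ j : Fin k, j ≠ 0 → j ∉ W → q'.alw (a1, p j) = q.alw (a1, p j) := by
  intro l _ hall q' W
  have hsum : ∀ i j : Fin k, i ≠ 0 → j ≠ 0 → i ≠ j →
      q.bal a1 < q.alw (a1, p i) + q.alw (a1, p j) :=
    hut.elim (fun hk _ _ hi hj hij => absurd (Fin.eq_of_ne_zero_of_le_two hk hi hj) hij) id
  obtain ⟨i0, hsucc, huniq, hfinal⟩ :=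
    exists_isUniqueSuccess_runRes (ops := compOps ω q a1 ad p)
      (fun _ => compOps_fst_of_snd_eq_false)
      (fun _ => isStuck_compOps_of_snd_eq_true had hp1 hinj hB hAi hsum)
      ⟨0, hall 0, compOps_zero_snd hp1⟩
  have hunique_iff (j : Fin k) :
      IsUniqueSuccess (runRes (compOps ω q a1 ad p) l q) j ↔ i0 = j :=
    ⟨huniq.eq, fun h => h ▸ huniq⟩
  have hW : W = ({i0} : Finset (Fin k)).erase 0 := by
    simp only [W, q', hfinal, filter_alw_compOps_eq_zero hinj hAi hsucc]
  refine ⟨?_, ?_, fun i hi => ?_, fun j hj hjW => ?_⟩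
  · rw [hW]
    exact Finset.card_erase_le.trans (Finset.card_singleton i0).le
  · refine Iff.trans ?_ (hunique_iff 0).symm
    by_cases hi0 : i0 = 0 <;> simp [hW, hi0, Finset.erase_eq_empty_iff]
  · refine Iff.trans ?_ (hunique_iff i).symm
    by_cases hi0 : i0 = 0
    · simp [hW, hi0, Ne.symm hi]
    · rw [hW, Finset.erase_eq_of_notMem (by simpa [eq_comm] using hi0), Finset.singleton_inj]
  · have hji : j ≠ i0 := fun h =>
      hjW (hW ▸ Finset.mem_erase.2 ⟨hj, Finset.mem_singleton.2 h⟩)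
    simp only [q', hfinal, compOps_alw hinj hsucc hj, hji, if_false]

/-- let `(β', α')` be the final state of a sequential execution
from `q` of all `k` competing invocations, each exactly once, in an arbitrary
order. Then `W = {i ≠ 0 : α'(a_1, p_i) = 0}` has at most one element; `W = ∅`
iff the owner's `transfer` is the unique successful invocation, `W = {i}` iff
`o_i` is the unique successful invocation; and `α'(a_1, p_j) = A_j` for every
non-owner index `j ∉ W`. -/
theorem stmt6 (n : ℕ) (hn : 1 ≤ n)
    (hcA : Fintype.card A = n) (hcP : Fintype.card P = n) (ω : A ≃ P)
    (q : TokenState A P) (a1 ad : A) (had : ad ≠ a1)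
    (k : ℕ) [NeZero k] (hkn : k ≤ n)
    (p : Fin k → P) (hinj : Function.Injective p) (hp1 : p 0 = ω a1)
    (hB : 0 < q.bal a1)
    (hAi : ∀ i : Fin k, i ≠ 0 → 0 < q.alw (a1, p i))
    (hut : k ≤ 2 ∨ ∀ i j : Fin k, i ≠ 0 → j ≠ 0 → i ≠ j →
      q.bal a1 < q.alw (a1, p i) + q.alw (a1, p j)) :
    ∀ l : List (Fin k), l.Nodup → (∀ i : Fin k, i ∈ l) →
      let q' := execRun (compOps ω q a1 ad p) l q
      let W : Finset (Fin k) :=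
        Finset.univ.filter fun i => i ≠ 0 ∧ q'.alw (a1, p i) = 0
      W.card ≤ 1 ∧
      (W = ∅ ↔
        (((0 : Fin k), true) ∈ runRes (compOps ω q a1 ad p) l q ∧
          ∀ x ∈ runRes (compOps ω q a1 ad p) l q, x.2 = true → x.1 = 0)) ∧
      (∀ i : Fin k, i ≠ 0 →
        (W = {i} ↔
          ((i, true) ∈ runRes (compOps ω q a1 ad p) l q ∧
            ∀ x ∈ runRes (compOps ω q a1 ad p) l q, x.2 = true → x.1 = i))) ∧
      ∀ j : Fin k, j ≠ 0 → j ∉ W → q'.alw (a1, p j) = q.alw (a1, p j) :=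
  stmt6_general ω q a1 ad had k p hinj hp1 hB hAi hut
end

section
/- In any sequential execution from q of a sequence of invocations drawn from the competing invocations o_1, …, o_k (each occurring at most once, in an arbitrary order), every invocation that occurs after a successful invocation returns false; consequently, once some invocation returns true, the token state remains unchanged for the rest of the execution. -/
variable {A P : Type*} [DecidableEq A] [DecidableEq P] [Fintype A] [Fintype P]

/-- in any sequential execution from `q` of a sequence of
competing invocations (each occurring at most once, in an arbitrary order),
every invocation occurring after a successful one returns `false`, and once
some invocation returns `true`, the token state remains unchanged for the
rest of the execution. -/
theorem stmt7 (n : ℕ) (hn : 1 ≤ n)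
    (hcA : Fintype.card A = n) (hcP : Fintype.card P = n) (ω : A ≃ P)
    (q : TokenState A P) (a1 ad : A) (had : ad ≠ a1)
    (k : ℕ) [NeZero k] (hkn : k ≤ n)
    (p : Fin k → P) (hinj : Function.Injective p) (hp1 : p 0 = ω a1)
    (hB : 0 < q.bal a1)
    (hAi : ∀ i : Fin k, i ≠ 0 → 0 < q.alw (a1, p i))
    (hut : k ≤ 2 ∨ ∀ i j : Fin k, i ≠ 0 → j ≠ 0 → i ≠ j →
      q.bal a1 < q.alw (a1, p i) + q.alw (a1, p j)) :
    ∀ l1 l2 : List (Fin k), (l1 ++ l2).Nodup →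
      (∃ x ∈ runRes (compOps ω q a1 ad p) l1 q, x.2 = true) →
      (∀ y ∈ runRes (compOps ω q a1 ad p) l2
          (execRun (compOps ω q a1 ad p) l1 q), y.2 = false) ∧
      ∀ l3 : List (Fin k), l3 <+: l2 →
        execRun (compOps ω q a1 ad p) l3 (execRun (compOps ω q a1 ad p) l1 q)
          = execRun (compOps ω q a1 ad p) l1 q := by
  intro l1 l2 _hnd hsucc
  set ops := compOps ω q a1 ad p with hops
  have ha1 : ω.symm (p 0) = a1 := by rw [hp1]; simp
  have hops0 : ops 0 = transferOp ω (p 0) ad (q.bal a1) := by simp [hops, compOps]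
  have hopsi : ∀ i : Fin k, i ≠ 0 → ops i = transferFromOp (p i) a1 ad (q.alw (a1, p i)) := by
    intro i hi; simp [hops, compOps, hi]
  -- a failed operation leaves the state unchanged
  have hfail : ∀ (j : Fin k) (s : TokenState A P),
      (ops j s).2 = false → (ops j s).1 = s := by
    intro j s h
    by_cases h0 : j = 0
    · subst h0; rw [hops0] at h ⊢
      simp only [transferOp] at h ⊢
      split_ifs at h ⊢ <;> simp_all
    · rw [hopsi j h0] at h ⊢
      simp only [transferFromOp] at h ⊢
      split_ifs at h ⊢ <;> simp_all
  -- from a dead state, runs do nothing and all responses are false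
  have hdead_run : ∀ (l : List (Fin k)) (s : TokenState A P),
      (∀ j : Fin k, (ops j s).2 = false) →
      (∀ y ∈ runRes ops l s, y.2 = false) ∧ execRun ops l s = s := by
    intro l
    induction l with
    | nil => intro s _; exact ⟨by simp [runRes], rfl⟩
    | cons i r ih =>
      intro s hd
      have h1 : (ops i s).1 = s := hfail i s (hd i)
      have := ih s hd
      constructor
      · intro y hy
        rw [runRes] at hy
        rcases List.mem_cons.1 hy with rfl | hy
        · exact hd i
        · rw [h1] at hy; exact this.1 y hy
      · rw [execRun, h1]; exact this.2
  -- a successful operation from q leads to a dead state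
  have hsucc_dead : ∀ j : Fin k, (ops j q).2 = true →
      ∀ j' : Fin k, (ops j' (ops j q).1).2 = false := by
    intro j hj j'
    by_cases h0 : j = 0
    · subst h0
      have hbal : (transferOp ω (p 0) ad (q.bal a1) q).1.bal a1 = 0 := by
        simp only [transferOp, ha1]
        rw [if_pos le_rfl]
        simp [Function.update_of_ne had.symm]
      rw [hops0]
      generalize (transferOp ω (p 0) ad (q.bal a1) q).1 = s at hbal ⊢
      by_cases h0' : j' = 0
      · subst h0'
        rw [hops0]
        simp only [transferOp, ha1]
        rw [if_neg (by rw [hbal]; omega)]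
      · rw [hopsi j' h0']
        simp only [transferFromOp]
        rw [if_neg]
        rw [hbal]
        have := hAi j' h0'
        intro ⟨h1, _⟩; omega
    · -- j ≠ 0 : transferFrom succeeded
      have hAj : 0 < q.alw (a1, p j) := hAi j h0
      rw [hopsi j h0] at hj ⊢
      have hle : q.alw (a1, p j) ≤ q.bal a1 := by
        by_contra hle
        simp only [transferFromOp] at hj
        rw [if_neg (by intro ⟨h1, _⟩; exact hle h1)] at hj
        simp at hj
      have hbal : (transferFromOp (p j) a1 ad (q.alw (a1, p j)) q).1.bal a1
          = q.bal a1 - q.alw (a1, p j) := by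
        simp only [transferFromOp]
        rw [if_pos ⟨hle, le_rfl⟩]
        simp [Function.update_of_ne had.symm]
      have halw : (transferFromOp (p j) a1 ad (q.alw (a1, p j)) q).1.alw
          = Function.update q.alw (a1, p j) 0 := by
        simp only [transferFromOp]
        rw [if_pos ⟨hle, le_rfl⟩]
        simp
      generalize (transferFromOp (p j) a1 ad (q.alw (a1, p j)) q).1 = s at hbal halw ⊢
      by_cases h0' : j' = 0
      · subst h0'
        rw [hops0]
        simp only [transferOp, ha1]
        rw [if_neg (by rw [hbal]; omega)]
      · rw [hopsi j' h0']
        simp only [transferFromOp]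
        rw [if_neg]
        rw [hbal, halw]
        intro ⟨h1, h2⟩
        by_cases hpp : p j' = p j
        · rw [hpp, Function.update_self] at h2
          have := hAi j' h0'
          rw [hpp] at this; omega
        · rw [Function.update_of_ne (by simp [hpp])] at h2
          have hjj : j' ≠ j := fun h => hpp (by rw [h])
          rcases hut with hk2 | hut
          · have hj1 : (j : ℕ) ≠ 0 := fun h => h0 (Fin.ext h)
            have hj'1 : (j' : ℕ) ≠ 0 := fun h => h0' (Fin.ext h)
            have hjk := j.isLt
            have hj'k := j'.isLt
            exact hjj (Fin.ext (by omega))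
          · have := hut j j' h0 h0' hjj.symm
            omega
  -- first success happens from state q, afterwards dead
  have hmain : ∀ l : List (Fin k), (∃ x ∈ runRes ops l q, x.2 = true) →
      ∀ j' : Fin k, (ops j' (execRun ops l q)).2 = false := by
    intro l
    induction l with
    | nil => simp [runRes]
    | cons i r ih =>
      intro h
      by_cases hi : (ops i q).2 = true
      · have hd := hsucc_dead i hi
        rw [execRun, (hdead_run r (ops i q).1 hd).2]
        exact hd
      · have hi' : (ops i q).2 = false := by simpa using hi
        have h1 := hfail i q hi'
        rw [execRun, h1]
        apply ih
        obtain ⟨x, hx, hx2⟩ := h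
        rcases List.mem_cons.1 hx with rfl | hx
        · exact absurd hx2 (by simp [hi'])
        · exact ⟨x, by rwa [h1] at hx, hx2⟩
  have hd := hmain l1 hsucc
  refine ⟨(hdead_run l2 _ hd).1, fun l3 _ => (hdead_run l3 _ hd).2⟩
end

section
/- Let q_0 = (β_0, α_0) be an initial ERC20 state: there is a designated account a_1 (the deployer's) with β_0(a_1) = B > 0, β_0(a) = 0 for every account a ≠ a_1, and α_0(a, p) = 0 for all a and p. Then for every 1 ≤ k ≤ n there exists a sequence of k − 1 approve invocations by the owner p_1 = ω(a_1) whose sequential execution from q_0 ends in a state q with q ∈ S_k and q ∈ Q_k. In particular, for every 1 ≤ k ≤ n the sets S_k and Q_k are nonempty. -/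
variable {A P : Type*} [DecidableEq A] [DecidableEq P] [Fintype A] [Fintype P]

/-- The `uniquetransfer(a, q)` predicate: `β(a) > 0` and either `a` has at most
two enabled spenders, or the allowances of any two distinct non-owner enabled
spenders sum to more than the balance of `a`. -/
def uniquetransfer (ω : A ≃ P) (a : A) (q : TokenState A P) : Prop :=
  0 < q.bal a ∧
    ((spenders ω q a).card ≤ 2 ∨
      ∀ p ∈ spenders ω q a \ {ω a}, ∀ p' ∈ spenders ω q a \ {ω a}, p ≠ p' →
        q.bal a < q.alw (a, p) + q.alw (a, p'))

/-- `Sset ω k`: the set of `k`-synchronization states, i.e. states `q` such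
that some account `a` has exactly `k` enabled spenders and `uniquetransfer(a, q)`
holds. -/
def Sset (ω : A ≃ P) (k : ℕ) : Set (TokenState A P) :=
  {q | ∃ a : A, (spenders ω q a).card = k ∧ uniquetransfer ω a q}

/-!
Starting from the initial state, the owner `p₁` of the deployer's account `a₁` approves
`k - 1` other processes for the whole supply `B`. Afterwards `a₁` has exactly `k` enabled
spenders, namely `p₁` and the approved ones, while every other account has only its owner.
Since each approved allowance equals the balance `B > 0`, any two of them sum to more than
`B`, so `uniquetransfer` holds at `a₁`.
-/

omit [Fintype A] [Fintype P] in
theorem foldl_approveOp_map_const (ω : A ≃ P) (p : P) (v : ℕ) (L : List P)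
    (s : TokenState A P) :
    (L.map (·, v)).foldl (fun s pv => (approveOp ω p pv.1 pv.2 s).1) s =
      ⟨s.bal, fun x => if x.1 = ω.symm p ∧ x.2 ∈ L then v else s.alw x⟩ := by
  induction L generalizing s with
  | nil => simp
  | cons p' L ih =>
    rw [List.map_cons, List.foldl_cons, ih]
    congr 1
    funext x
    simp only [approveOp, Function.update_apply, List.mem_cons]
    grind

omit [DecidableEq A] [Fintype A] in
theorem spenders_of_bal_eq_zero (ω : A ≃ P) {q : TokenState A P} {a : A} (h : q.bal a = 0) :
    spenders ω q a = {ω a} :=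
  if_pos h

omit [DecidableEq A] [Fintype A] in
theorem spenders_eq_insert_of_alw (ω : A ≃ P) {q : TokenState A P} {a : A} {T : Finset P}
    {v : ℕ} (hbal : 0 < q.bal a) (hv : 0 < v)
    (halw : ∀ p, q.alw (a, p) = if p ∈ T then v else 0) :
    spenders ω q a = insert (ω a) T := by
  ext p
  by_cases hp : p ∈ T <;> simp [spenders, hbal.ne', halw, hp, hv]

omit [DecidableEq A] [Fintype A] in
theorem uniquetransfer_of_bal_le_alw (ω : A ≃ P) {q : TokenState A P} {a : A}
    (hbal : 0 < q.bal a) (halw : ∀ p ∈ spenders ω q a, p ≠ ω a → q.bal a ≤ q.alw (a, p)) :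
    uniquetransfer ω a q := by
  refine ⟨hbal, Or.inr fun p hp p' hp' _ => ?_⟩
  obtain ⟨hp, hpa⟩ := Finset.mem_sdiff.1 hp
  obtain ⟨hp', hp'a⟩ := Finset.mem_sdiff.1 hp'
  rw [Finset.mem_singleton] at hpa hp'a
  have hpos : 0 < q.alw (a, p') := by
    simp only [spenders, hbal.ne', if_false, Finset.mem_filter] at hp'
    exact hp'.2.resolve_left hp'a
  linarith [halw p hp hpa]

omit [DecidableEq A] in
theorem maxSpenders_eq_card_spenders (ω : A ≃ P) {q : TokenState A P} {a : A}
    (h : ∀ b, (spenders ω q b).card ≤ (spenders ω q a).card) :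
    maxSpenders ω q = (spenders ω q a).card :=
  le_antisymm (Finset.sup_le fun b _ => h b)
    (Finset.le_sup (f := fun b => (spenders ω q b).card) (Finset.mem_univ a))

theorem mem_Sset_inter_Qset_of_alw_eq_bal (ω : A ≃ P) {q : TokenState A P} {a : A}
    {T : Finset P} (hbal : 0 < q.bal a) (hbal0 : ∀ b, b ≠ a → q.bal b = 0)
    (halw : ∀ p, q.alw (a, p) = if p ∈ T then q.bal a else 0) (hT : ω a ∉ T) :
    q ∈ Sset ω (T.card + 1) ∩ Qset ω (T.card + 1) := by
  have hsp : spenders ω q a = insert (ω a) T := spenders_eq_insert_of_alw ω hbal hbal halw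
  have hcard : (spenders ω q a).card = T.card + 1 := by
    rw [hsp, Finset.card_insert_of_notMem hT]
  refine ⟨⟨a, hcard, uniquetransfer_of_bal_le_alw ω hbal fun p hp hpa => ?_⟩, ?_⟩
  · rw [hsp, Finset.mem_insert, or_iff_right hpa] at hp
    simp [halw, hp]
  · refine (maxSpenders_eq_card_spenders ω fun b => ?_).trans hcard
    by_cases hb : b = a
    · rw [hb]
    · rw [spenders_of_bal_eq_zero ω (hbal0 b hb), hcard, Finset.card_singleton]
      omega

theorem stmt8_general (n : ℕ)
    (hcP : Fintype.card P = n) (ω : A ≃ P)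
    (a1 : A) (B : ℕ) (hB : 0 < B)
    (q0 : TokenState A P)
    (hbal1 : q0.bal a1 = B) (hbal0 : ∀ a : A, a ≠ a1 → q0.bal a = 0)
    (halw0 : ∀ x : A × P, q0.alw x = 0) :
    ∀ k : ℕ, 1 ≤ k → k ≤ n →
      (∃ ℓ : List (P × ℕ), ℓ.length = k - 1 ∧
        ℓ.foldl (fun s pv => (approveOp ω (ω a1) pv.1 pv.2 s).1) q0
          ∈ Sset ω k ∩ Qset ω k) ∧
      (Sset (A := A) (P := P) ω k).Nonempty ∧
      (Qset (A := A) (P := P) ω k).Nonempty := by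
  intro k hk1 hkn
  obtain ⟨T, hTsub, hTcard⟩ := Finset.exists_subset_card_eq (s := Finset.univ.erase (ω a1))
    (n := k - 1) (by rw [Finset.card_erase_of_mem (Finset.mem_univ _), Finset.card_univ, hcP]; omega)
  have hT : ω a1 ∉ T := fun h => Finset.notMem_erase _ _ (hTsub h)
  have hq : (T.toList.map (·, B)).foldl (fun s pv => (approveOp ω (ω a1) pv.1 pv.2 s).1) q0
      ∈ Sset ω k ∩ Qset ω k := by
    rw [foldl_approveOp_map_const, show k = T.card + 1 by omega]
    exact mem_Sset_inter_Qset_of_alw_eq_bal ω (hbal1 ▸ hB) hbal0 (by simp [hbal1, halw0]) hT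
  exact ⟨⟨_, by simp [hTcard], hq⟩, ⟨_, hq.1⟩, ⟨_, hq.2⟩⟩

/-- from an initial ERC20 state (the deployer's account `a_1`
holds all the positive supply, every other balance is `0` and every allowance
is `0`), for every `1 ≤ k ≤ n` there is a sequence of `k - 1` `approve`
invocations by the owner `p_1 = ω(a_1)` whose sequential execution ends in a
state belonging to `S_k` and to `Q_k`; in particular `S_k` and `Q_k` are
nonempty. -/
theorem stmt8 (n : ℕ) (hn : 1 ≤ n)
    (hcA : Fintype.card A = n) (hcP : Fintype.card P = n) (ω : A ≃ P)
    (a1 : A) (B : ℕ) (hB : 0 < B)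
    (q0 : TokenState A P)
    (hbal1 : q0.bal a1 = B) (hbal0 : ∀ a : A, a ≠ a1 → q0.bal a = 0)
    (halw0 : ∀ x : A × P, q0.alw x = 0) :
    ∀ k : ℕ, 1 ≤ k → k ≤ n →
      (∃ ℓ : List (P × ℕ), ℓ.length = k - 1 ∧
        ℓ.foldl (fun s pv => (approveOp ω (ω a1) pv.1 pv.2 s).1) q0
          ∈ Sset ω k ∩ Qset ω k) ∧
      (Sset (A := A) (P := P) ω k).Nonempty ∧
      (Qset (A := A) (P := P) ω k).Nonempty :=
  stmt8_general n hcP ω a1 B hB q0 hbal1 hbal0 halw0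
end

section
/- Let p ≠ p' be distinct processes, and consider the invocations transfer(a, x) by p and transfer(b, y) by p', where a ≠ a_{p'} and b ≠ a_p. Then from any token state q, executing the two invocations in either order yields the same final state, and each invocation returns the same response in both orders. -/
variable {A P : Type*} [DecidableEq A] [DecidableEq P] [Fintype A] [Fintype P]

/-- for distinct processes `p ≠ p'`, the invocations
`transfer(a, x)` by `p` and `transfer(b, y)` by `p'`, with `a ≠ a_{p'}` and
`b ≠ a_p`, commute: from any state, executing them in either order yields the
same final state, and each invocation returns the same response in both
orders. -/
theorem stmt11 (n : ℕ) (hn : 1 ≤ n)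
    (hcA : Fintype.card A = n) (hcP : Fintype.card P = n) (ω : A ≃ P)
    (p p' : P) (hpp : p ≠ p') (a b : A) (x y : ℕ)
    (ha : a ≠ ω.symm p') (hb : b ≠ ω.symm p)
    (q : TokenState A P) :
    (transferOp ω p' b y (transferOp ω p a x q).1).1
      = (transferOp ω p a x (transferOp ω p' b y q).1).1 ∧
    (transferOp ω p a x q).2
      = (transferOp ω p a x (transferOp ω p' b y q).1).2 ∧
    (transferOp ω p' b y q).2
      = (transferOp ω p' b y (transferOp ω p a x q).1).2 := by
  have hs : ω.symm p ≠ ω.symm p' := fun h => hpp (ω.symm.injective (by simpa using h))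
  -- p's op leaves bal at ω.symm p' unchanged, and vice versa
  by_cases h1 : x ≤ q.bal (ω.symm p) <;> by_cases h2 : y ≤ q.bal (ω.symm p')
  all_goals
    simp only [transferOp, h1, h2, if_true, if_false, if_pos, if_neg, Function.update_apply,
      if_neg ha, if_neg hb, if_neg hs, if_neg hs.symm]
  all_goals
    try simp only [if_neg (show ω.symm p' ≠ a from fun h => ha h.symm),
      if_neg (show ω.symm p ≠ b from fun h => hb h.symm), if_neg hs, if_neg hs.symm,
      h1, h2, if_true, if_false]
  · refine ⟨?_, trivial, trivial⟩
    simp only [TokenState.mk.injEq]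
    refine ⟨funext fun c => ?_, trivial⟩
    simp only [Function.update_apply]
    split_ifs <;> subst_vars <;> simp_all <;> omega
  all_goals exact ⟨trivial, trivial, trivial⟩
end

section
/- Let p ≠ p' be distinct processes, and consider the invocations transferFrom(a_s, a_d, x) by p and transferFrom(a_s', a_d', y) by p', where a_s ≠ a_s', a_d ≠ a_s', and a_d' ≠ a_s. Then from any token state q, executing the two invocations in either order yields the same final state, and each invocation returns the same response in both orders. -/
variable {A P : Type*} [DecidableEq A] [DecidableEq P] [Fintype A] [Fintype P]

-- auxiliary success/failure equations for `transferFromOp`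
theorem tfo_pos {A P : Type*} [DecidableEq A] [DecidableEq P]
    (p : P) (asrc ad : A) (v : ℕ) (q : TokenState A P)
    (h : v ≤ q.bal asrc ∧ v ≤ q.alw (asrc, p)) :
    transferFromOp p asrc ad v q =
      (⟨Function.update (Function.update q.bal asrc (q.bal asrc - v)) ad
          (Function.update q.bal asrc (q.bal asrc - v) ad + v),
        Function.update q.alw (asrc, p) (q.alw (asrc, p) - v)⟩, true) := by
  simp [transferFromOp, h]

theorem tfo_neg {A P : Type*} [DecidableEq A] [DecidableEq P]
    (p : P) (asrc ad : A) (v : ℕ) (q : TokenState A P)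
    (h : ¬ (v ≤ q.bal asrc ∧ v ≤ q.alw (asrc, p))) :
    transferFromOp p asrc ad v q = (q, false) := by
  simp only [transferFromOp, if_neg h]

/-- for distinct processes `p ≠ p'`, the invocations
`transferFrom(a_s, a_d, x)` by `p` and `transferFrom(a_s', a_d', y)` by `p'`,
with `a_s ≠ a_s'`, `a_d ≠ a_s'` and `a_d' ≠ a_s`, commute: from any state,
executing them in either order yields the same final state, and each
invocation returns the same response in both orders. -/
theorem stmt12 (n : ℕ) (hn : 1 ≤ n)
    (hcA : Fintype.card A = n) (hcP : Fintype.card P = n) (ω : A ≃ P)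
    (p p' : P) (hpp : p ≠ p') (as ad as' ad' : A) (x y : ℕ)
    (hss : as ≠ as') (hds : ad ≠ as') (hds' : ad' ≠ as)
    (q : TokenState A P) :
    (transferFromOp p' as' ad' y (transferFromOp p as ad x q).1).1
      = (transferFromOp p as ad x (transferFromOp p' as' ad' y q).1).1 ∧
    (transferFromOp p as ad x q).2
      = (transferFromOp p as ad x (transferFromOp p' as' ad' y q).1).2 ∧
    (transferFromOp p' as' ad' y q).2
      = (transferFromOp p' as' ad' y (transferFromOp p as ad x q).1).2 := by
  have hsp : ((as', p') : A × P) ≠ (as, p) := fun h => hss (congrArg Prod.fst h).symm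
  have hsp' : ((as, p) : A × P) ≠ (as', p') := fun h => hss (congrArg Prod.fst h)
  by_cases h1 : x ≤ q.bal as ∧ x ≤ q.alw (as, p) <;>
  by_cases h2 : y ≤ q.bal as' ∧ y ≤ q.alw (as', p')
  · -- both succeed
    have r1 := tfo_pos p as ad x q h1
    have r2 := tfo_pos p' as' ad' y q h2
    have c2 : y ≤ (transferFromOp p as ad x q).1.bal as' ∧
        y ≤ (transferFromOp p as ad x q).1.alw (as', p') := by
      rw [r1]; dsimp only
      rw [Function.update_of_ne (Ne.symm hds), Function.update_of_ne (Ne.symm hss),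
        Function.update_of_ne hsp]
      exact h2
    have c1 : x ≤ (transferFromOp p' as' ad' y q).1.bal as ∧
        x ≤ (transferFromOp p' as' ad' y q).1.alw (as, p) := by
      rw [r2]; dsimp only
      rw [Function.update_of_ne (Ne.symm hds'), Function.update_of_ne hss,
        Function.update_of_ne hsp']
      exact h1
    have r12 := tfo_pos p' as' ad' y _ c2
    have r21 := tfo_pos p as ad x _ c1
    refine ⟨?_, ?_, ?_⟩
    · rw [r12, r21, r1, r2]
      simp only [r1, r2] at *
      clear r1 r2 r12 r21 c1 c2 hcA hcP hn
      simp only [Prod.mk.injEq, TokenState.mk.injEq]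
      refine ⟨?_, ?_⟩
      · funext z
        simp only [Function.update_apply]
        split_ifs <;> subst_vars <;>
          first | rfl | omega | simp_all | (exfalso; exact hss rfl)
      · funext z
        simp only [Function.update_apply]
        split_ifs <;> subst_vars <;>
          first | rfl | omega | simp_all
    · rw [r1, r21]
    · rw [r2, r12]
  · -- first succeeds, second fails
    have r1 := tfo_pos p as ad x q h1
    have r2 := tfo_neg p' as' ad' y q h2
    have c2 : ¬ (y ≤ (transferFromOp p as ad x q).1.bal as' ∧
        y ≤ (transferFromOp p as ad x q).1.alw (as', p')) := by
      rw [r1]; dsimp only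
      rw [Function.update_of_ne (Ne.symm hds), Function.update_of_ne (Ne.symm hss),
        Function.update_of_ne hsp]
      exact h2
    have r12 := tfo_neg p' as' ad' y _ c2
    simp only [r1] at r12
    refine ⟨?_, ?_, ?_⟩
    · simp only [r12, r2, r1]
    · simp only [r2]
    · simp only [r2, r1, r12]
  · -- first fails, second succeeds
    have r1 := tfo_neg p as ad x q h1
    have r2 := tfo_pos p' as' ad' y q h2
    have c1 : ¬ (x ≤ (transferFromOp p' as' ad' y q).1.bal as ∧
        x ≤ (transferFromOp p' as' ad' y q).1.alw (as, p)) := by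
      rw [r2]; dsimp only
      rw [Function.update_of_ne (Ne.symm hds'), Function.update_of_ne hss,
        Function.update_of_ne hsp']
      exact h1
    have r21 := tfo_neg p as ad x _ c1
    simp only [r2] at r21
    refine ⟨?_, ?_, ?_⟩
    · simp only [r21, r1, r2]
    · simp only [r1, r2, r21]
    · simp only [r1]
  · -- both fail
    have r1 := tfo_neg p as ad x q h1
    have r2 := tfo_neg p' as' ad' y q h2
    refine ⟨?_, ?_, ?_⟩
    · simp only [r1, r2]
    · simp only [r2]
    · simp only [r1]
end

section
/- Let p ≠ p' be distinct processes, and consider the invocations approve(p̄, v) by p and transferFrom(a_s, a_d, y) by p', where a_p ≠ a_s or p̄ ≠ p'. Then from any token state q, executing the two invocations in either order yields the same final state, and each invocation returns the same response in both orders. -/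
variable {A P : Type*} [DecidableEq A] [DecidableEq P] [Fintype A] [Fintype P]

/-- for distinct processes `p ≠ p'`, the invocations
`approve(p̄, v)` by `p` and `transferFrom(a_s, a_d, y)` by `p'`, where
`a_p ≠ a_s` or `p̄ ≠ p'`, commute: from any state, executing them in either
order yields the same final state, and each invocation returns the same
response in both orders. -/
theorem stmt13 (n : ℕ) (hn : 1 ≤ n)
    (hcA : Fintype.card A = n) (hcP : Fintype.card P = n) (ω : A ≃ P)
    (p p' : P) (hpp : p ≠ p') (pbar : P) (v : ℕ) (as ad : A) (y : ℕ)
    (hside : ω.symm p ≠ as ∨ pbar ≠ p')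
    (q : TokenState A P) :
    (transferFromOp p' as ad y (approveOp ω p pbar v q).1).1
      = (approveOp ω p pbar v (transferFromOp p' as ad y q).1).1 ∧
    (approveOp ω p pbar v q).2
      = (approveOp ω p pbar v (transferFromOp p' as ad y q).1).2 ∧
    (transferFromOp p' as ad y q).2
      = (transferFromOp p' as ad y (approveOp ω p pbar v q).1).2 := by
  have hkey : ((ω.symm p, pbar) : A × P) ≠ (as, p') := by
    rcases hside with h | h <;> simp [Prod.ext_iff] <;> tauto
  have halw : Function.update q.alw (ω.symm p, pbar) v (as, p') = q.alw (as, p') :=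
    Function.update_of_ne hkey.symm _ _
  by_cases hc : y ≤ q.bal as ∧ y ≤ q.alw (as, p')
  · simp only [approveOp, transferFromOp, halw, hc, if_pos, and_self, if_true]
    refine ⟨?_, trivial⟩
    congr 1
    exact Function.update_comm hkey _ _ _
  · simp only [approveOp, transferFromOp, halw, hc, if_neg, not_false_iff, if_false]
    simp
end
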